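/- (Trunk of connected sum) Let M₁ and M₂ be closed n-dimensional simplicial pseudomanifolds with n ≥ 2 even and unit facet weights. Then there exists a connected sum M₁ # M₂ such that tr(M₁ # M₂) = max(tr(M₁), tr(M₂)), where tr(M) is the minimum over orderings O of the maximum value of Λ for O. -/
import Mathlib


open Finset

/-- The facets ((n−1)-dimensional faces) of an n-simplex `s`, as its n-element subsets. -/
def simFacets {V : Type} [DecidableEq V] (n : ℕ) (s : Finset V) : Finset (Finset V) :=
  s.powersetCard n

/-- An n-dimensional (closed) pseudomanifold: a nonempty finite pure n-dimensional
simplicial complex, given by its set `K` of n-simplices (each an (n+1)-element vertex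
set), in which every (n−1)-face lies in exactly two n-simplices and the dual graph is
connected. -/
def IsPseudomanifold {V : Type} [DecidableEq V] (n : ℕ) (K : Finset (Finset V)) : Prop :=
  K.Nonempty ∧
  (∀ s ∈ K, s.card = n + 1) ∧
  (∀ f : Finset V, f.card = n → (∃ s ∈ K, f ⊆ s) → (K.filter (fun s => f ⊆ s)).card = 2) ∧
  (∀ s ∈ K, ∀ t ∈ K,
    Relation.ReflTransGen (fun a b => a ∈ K ∧ b ∈ K ∧ a ≠ b ∧ (a ∩ b).card = n) s t)

/-- The sublevel set of an ordering `O` of the n-simplices of `K` at height `j`: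
the simplices at heights 1,…,j. -/
def psub {V : Type} [DecidableEq V] (K : Finset (Finset V)) {N : ℕ}
    (O : Fin N ≃ {s : Finset V // s ∈ K}) (j : ℕ) : Finset (Finset V) :=
  ((Finset.univ : Finset (Fin N)).filter (fun k : Fin N => k.val + 1 ≤ j)).image
    (fun k => (O k).val)

/-- The level surface at height `j`: the (n−1)-faces shared between a simplex of the
sublevel set and one of its complement. -/
def plevel {V : Type} [DecidableEq V] [Fintype V] (n : ℕ) (K : Finset (Finset V)) {N : ℕ}
    (O : Fin N ≃ {s : Finset V // s ∈ K}) (j : ℕ) : Finset (Finset V) :=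
  (Finset.univ : Finset (Finset V)).filter
    (fun f => f.card = n ∧ (∃ s ∈ psub K O j, f ⊆ s) ∧ ∃ s ∈ K, s ∉ psub K O j ∧ f ⊆ s)

/-- Λ(j) for unit facet weights: the number of facets in the level surface at height j. -/
def pLam {V : Type} [DecidableEq V] [Fintype V] (n : ℕ) (K : Finset (Finset V)) {N : ℕ}
    (O : Fin N ≃ {s : Finset V // s ∈ K}) (j : ℕ) : ℕ :=
  (plevel n K O j).card

/-- `K` is a connected sum of `K₁` and `K₂`: obtained by removing an n-simplex from each
and gluing the rest along the boundary spheres via a simplicial homeomorphism (encoded by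
vertex embeddings φ₁, φ₂ whose images meet exactly in the common glued sphere). -/
def IsConnSum {V V₁ V₂ : Type} [DecidableEq V] [DecidableEq V₁] [DecidableEq V₂]
    (K : Finset (Finset V)) (K₁ : Finset (Finset V₁)) (K₂ : Finset (Finset V₂)) : Prop :=
  ∃ (C₁ : Finset V₁) (C₂ : Finset V₂) (φ₁ : V₁ ↪ V) (φ₂ : V₂ ↪ V),
    C₁ ∈ K₁ ∧ C₂ ∈ K₂ ∧
    C₁.map φ₁ = C₂.map φ₂ ∧
    (∀ v₁ : V₁, ∀ v₂ : V₂, φ₁ v₁ = φ₂ v₂ → v₁ ∈ C₁ ∧ v₂ ∈ C₂) ∧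
    K = (K₁.erase C₁).image (fun s => s.map φ₁) ∪ (K₂.erase C₂).image (fun s => s.map φ₂)

/-- `t` is a (local) maximum of the level-weight function Λ of an ordering. -/
def IsMaxAtN (N : ℕ) (Λ : ℕ → ℕ) (t : ℕ) : Prop :=
  ∃ tm tp : ℕ, tm < t ∧ t < tp ∧ tp ≤ N ∧
    Λ tm < Λ (tm + 1) ∧ Λ tp < Λ (tp - 1) ∧
    ∀ k, tm < k → k < tp → Λ k = Λ t

open Classical in
/-- The width Ω(O) of an ordering O: the values of Λ at its maxima, arranged in
non-increasing order.  Widths are compared lexicographically via the order on `List ℕ`. -/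
noncomputable def pwidth {V : Type} [DecidableEq V] [Fintype V] (n : ℕ)
    (K : Finset (Finset V)) {N : ℕ} (O : Fin N ≃ {s : Finset V // s ∈ K}) : List ℕ :=
  ((((Finset.range (N + 1)).filter (fun t => IsMaxAtN N (pLam n K O) t)).val.map
    (pLam n K O)).sort (· ≤ ·)).reverse

/-- Strict lexicographic comparison of width sequences. -/
def PWidthLT (l₁ l₂ : List ℕ) : Prop := List.Lex (· < ·) l₁ l₂

/-- Lexicographic comparison of width sequences. -/
def PWidthLE (l₁ l₂ : List ℕ) : Prop := PWidthLT l₁ l₂ ∨ l₁ = l₂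

/-- The trunk of an ordering: the maximum value achieved by Λ. -/
def ptrunkOrd {V : Type} [DecidableEq V] [Fintype V] (n : ℕ) (K : Finset (Finset V))
    {N : ℕ} (O : Fin N ≃ {s : Finset V // s ∈ K}) : ℕ :=
  (Finset.range (N + 1)).sup (pLam n K O)

/-- The trunk of a pseudomanifold: the minimum of the trunk over all orderings. -/
noncomputable def ptrunk {V : Type} [DecidableEq V] [Fintype V] (n : ℕ) (K : Finset (Finset V)) : ℕ :=
  sInf {t : ℕ | ∃ O : Fin K.card ≃ {s : Finset V // s ∈ K}, ptrunkOrd n K O = t}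

section Bnd
variable {V : Type} [DecidableEq V] [Fintype V]

/-- boundary of a subcollection -/
def bnd (n : ℕ) (K S : Finset (Finset V)) : Finset (Finset V) :=
  (Finset.univ : Finset (Finset V)).filter
    (fun f => f.card = n ∧ (∃ s ∈ S, f ⊆ s) ∧ ∃ s ∈ K, s ∉ S ∧ f ⊆ s)

lemma mem_bnd {n : ℕ} {K S : Finset (Finset V)} {f : Finset V} :
    f ∈ bnd n K S ↔ f.card = n ∧ (∃ s ∈ S, f ⊆ s) ∧ ∃ s ∈ K, s ∉ S ∧ f ⊆ s := by
  simp [bnd]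

lemma bnd_nonempty {n : ℕ} {K S : Finset (Finset V)} (hpm : IsPseudomanifold n K)
    (hS : S ⊆ K) (hne : S.Nonempty) (hproper : ∃ s ∈ K, s ∉ S) :
    (bnd n K S).Nonempty := by
  obtain ⟨s, hs⟩ := hne
  obtain ⟨t, htK, htS⟩ := hproper
  have hpath := hpm.2.2.2 s (hS hs) t htK
  clear htK
  induction hpath with
  | refl => exact absurd hs htS
  | @tail b c hab hbc ih =>
    by_cases hb : b ∈ S
    · exact ⟨b ∩ c, mem_bnd.2 ⟨hbc.2.2.2, ⟨b, hb, inter_subset_left⟩,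
        ⟨c, hbc.2.1, htS, inter_subset_right⟩⟩⟩
    · exact ih hb

lemma bnd_ridge {n : ℕ} {K S : Finset (Finset V)} (hpm : IsPseudomanifold n K)
    (hS : S ⊆ K) {f₀ : Finset V} (hf₀ : f₀ ∈ bnd n K S) {x : V} (hx : x ∈ f₀) :
    ∃ f₁ ∈ bnd n K S, f₁ ≠ f₀ ∧ f₀.erase x ⊆ f₁ := by
  classical
  obtain ⟨hcard, hin, hout⟩ := mem_bnd.1 hf₀
  have hn : 1 ≤ n := hcard ▸ card_pos.2 ⟨x, hx⟩
  set g := f₀.erase x with hg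
  have hgcard : g.card = n - 1 := by rw [hg, card_erase_of_mem hx, hcard]
  set Fg : Finset (Finset V) :=
    (Finset.univ : Finset (Finset V)).filter
      (fun f => f.card = n ∧ g ⊆ f ∧ ∃ s ∈ K, f ⊆ s) with hFg
  set c : Finset V → ℕ := fun f => (K.filter (fun s => f ⊆ s ∧ s ∈ S)).card with hc
  set W : Finset (Finset V) := K.filter (fun s => g ⊆ s ∧ s ∈ S) with hW
  have hcont : ∀ f ∈ Fg, (K.filter (fun s => f ⊆ s)).card = 2 := by
    intro f hf
    rw [hFg, mem_filter] at hf
    exact hpm.2.2.1 f hf.2.1 hf.2.2.2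
  -- exactly two facets between g and any containing simplex
  have htwo : ∀ s ∈ K, g ⊆ s → (Fg.filter (fun f => f ⊆ s)).card = 2 := by
    intro s hsK hgs
    have hscard : s.card = n + 1 := hpm.2.1 s hsK
    have heq : Fg.filter (fun f => f ⊆ s) = (s \ g).image (fun a => insert a g) := by
      ext f
      simp only [mem_filter, hFg, mem_univ, true_and, mem_image, mem_sdiff]
      constructor
      · rintro ⟨⟨hfc, hgf, -⟩, hfs⟩
        have h1 : (f \ g).card = 1 := by
          rw [card_sdiff_of_subset hgf, hfc, hgcard]; omega
        obtain ⟨a, ha⟩ := card_eq_one.1 h1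
        have haf : a ∈ f \ g := ha ▸ mem_singleton_self a
        obtain ⟨haf', hag⟩ := mem_sdiff.1 haf
        refine ⟨a, ⟨hfs haf', hag⟩, ?_⟩
        apply Finset.Subset.antisymm
        · exact insert_subset haf' hgf
        · intro y hy
          by_cases hyg : y ∈ g
          · exact mem_insert_of_mem hyg
          · have h2 : y ∈ f \ g := mem_sdiff.2 ⟨hy, hyg⟩
            rw [ha, mem_singleton] at h2
            subst h2
            exact mem_insert_self y g
      · rintro ⟨a, ⟨has, hag⟩, rfl⟩
        have hins : insert a g ⊆ s := insert_subset has hgs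
        refine ⟨⟨?_, subset_insert a g, ⟨s, hsK, hins⟩⟩, hins⟩
        rw [card_insert_of_notMem hag, hgcard]; omega
    rw [heq, card_image_of_injOn, card_sdiff_of_subset hgs, hscard, hgcard]
    · omega
    · intro a ha b hb hab
      simp only at hab
      have : a ∈ insert b g := hab ▸ mem_insert_self a g
      rcases mem_insert.1 this with h | h
      · exact h
      · exact absurd h (mem_sdiff.1 ha).2
  -- double counting
  have hsum : (∑ f ∈ Fg, c f) = 2 * W.card := by
    have : (∑ f ∈ Fg, c f) = ∑ f ∈ Fg, ∑ s ∈ K, if f ⊆ s ∧ s ∈ S then 1 else 0 := by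
      refine Finset.sum_congr rfl fun f _ => ?_
      simp only [hc, Finset.card_filter]
    rw [this, Finset.sum_comm]
    have : ∀ s ∈ K, (∑ f ∈ Fg, if f ⊆ s ∧ s ∈ S then 1 else 0)
        = if g ⊆ s ∧ s ∈ S then 2 else 0 := by
      intro s hsK
      by_cases hgs : g ⊆ s ∧ s ∈ S
      · rw [if_pos hgs]
        have : (∑ f ∈ Fg, if f ⊆ s ∧ s ∈ S then 1 else 0)
            = (Fg.filter (fun f => f ⊆ s)).card := by
          rw [Finset.card_filter]
          refine Finset.sum_congr rfl fun f _ => ?_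
          by_cases h : f ⊆ s
          · rw [if_pos ⟨h, hgs.2⟩, if_pos h]
          · rw [if_neg (fun hh => h hh.1), if_neg h]
        rw [this, htwo s hsK hgs.1]
      · rw [if_neg hgs]
        refine Finset.sum_eq_zero fun f hf => ?_
        rw [hFg, mem_filter] at hf
        by_cases hss : s ∈ S
        · refine if_neg fun hh => hgs ⟨hf.2.2.1.trans hh.1, hss⟩
        · exact if_neg fun hh => hss hh.2
    rw [Finset.sum_congr rfl this, ← Finset.sum_filter, ← hW, Finset.sum_const,
      smul_eq_mul, mul_comm]
  -- c f ≤ 2 on Fg, and boundary facets through g are exactly those with c f = 1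
  have hcle : ∀ f ∈ Fg, c f ≤ 2 := by
    intro f hf
    calc c f ≤ (K.filter (fun s => f ⊆ s)).card := by
          refine card_le_card fun a ha => ?_
          rw [mem_filter] at ha ⊢
          exact ⟨ha.1, ha.2.1⟩
      _ = 2 := hcont f hf
  have hf₀Fg : f₀ ∈ Fg := by
    rw [hFg, mem_filter]
    obtain ⟨s, hsS, hfs⟩ := hin
    exact ⟨mem_univ _, hcard, erase_subset x f₀, ⟨s, hS hsS, hfs⟩⟩
  have hiff : ∀ f ∈ Fg, (c f = 1 ↔ f ∈ bnd n K S) := by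
    intro f hf
    have hFg' := hf
    rw [hFg, mem_filter] at hFg'
    obtain ⟨-, hfc, hgf, hcontf⟩ := hFg'
    constructor
    · intro h1
      obtain ⟨s, hs⟩ := Finset.card_eq_one.1 h1
      have hsmem : s ∈ K.filter (fun s => f ⊆ s ∧ s ∈ S) := hs ▸ mem_singleton_self s
      rw [mem_filter] at hsmem
      refine mem_bnd.2 ⟨hfc, ⟨s, hsmem.2.2, hsmem.2.1⟩, ?_⟩
      by_contra hno
      push_neg at hno
      have : K.filter (fun s => f ⊆ s) = K.filter (fun s => f ⊆ s ∧ s ∈ S) := by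
        ext t
        simp only [mem_filter]
        refine ⟨fun ht => ⟨ht.1, ht.2, ?_⟩, fun ht => ⟨ht.1, ht.2.1⟩⟩
        by_contra htS
        exact (hno t ht.1 htS) ht.2
      have h2 := hcont f hf
      rw [this] at h2
      have h3 : c f = 2 := by simp only [hc]; exact h2
      omega
    · intro hfb
      obtain ⟨-, ⟨s, hsS, hfs⟩, ⟨t, htK, htS, hft⟩⟩ := mem_bnd.1 hfb
      have h1 : 1 ≤ c f := by
        rw [hc]
        refine card_pos.2 ⟨s, ?_⟩
        rw [mem_filter]
        exact ⟨hS hsS, hfs, hsS⟩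
      have h2 : c f ≠ 2 := by
        intro h2
        have hsub : K.filter (fun s => f ⊆ s ∧ s ∈ S) ⊆ K.filter (fun s => f ⊆ s) := by
          intro a ha
          rw [mem_filter] at ha ⊢
          exact ⟨ha.1, ha.2.1⟩
        have := Finset.eq_of_subset_of_card_le hsub (by rw [hcont f hf]; exact h2.symm.le)
        have htmem : t ∈ K.filter (fun s => f ⊆ s ∧ s ∈ S) := by
          rw [this, mem_filter]; exact ⟨htK, hft⟩
        rw [mem_filter] at htmem
        exact htS htmem.2.2
      have := hcle f hf
      omega
  set D := Fg.filter (fun f => c f = 1) with hD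
  have hDsum : (∑ f ∈ D, c f) = D.card := by
    rw [Finset.sum_congr rfl (fun f hf => (mem_filter.1 hf).2), Finset.sum_const, smul_eq_mul,
      mul_one]
  have hdvd : 2 ∣ ∑ f ∈ Fg.filter (fun f => ¬ c f = 1), c f := by
    refine Finset.dvd_sum fun f hf => ?_
    rw [mem_filter] at hf
    have := hcle f hf.1
    have h1 := hf.2
    interval_cases h : c f <;> omega
  obtain ⟨k, hk⟩ := hdvd
  have hsplit := Finset.sum_filter_add_sum_filter_not Fg (fun f => c f = 1) c
  rw [hsum] at hsplit
  rw [← hD] at hsplit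
  rw [hDsum, hk] at hsplit
  have hf₀D : f₀ ∈ D := by
    rw [hD, mem_filter]
    exact ⟨hf₀Fg, (hiff f₀ hf₀Fg).2 hf₀⟩
  have h1D : 1 ≤ D.card := card_pos.2 ⟨f₀, hf₀D⟩
  have h2D : 1 < D.card := by omega
  obtain ⟨f₁, hf₁D, hf₁ne⟩ := Finset.exists_mem_ne h2D f₀
  rw [hD, mem_filter] at hf₁D
  refine ⟨f₁, (hiff f₁ hf₁D.1).1 hf₁D.2, hf₁ne, ?_⟩
  have := hf₁D.1
  rw [hFg, mem_filter] at this
  exact this.2.2.1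

lemma iso_card {n : ℕ} {K T : Finset (Finset V)} (hpm : IsPseudomanifold n K)
    (hT : T ⊆ K) (hne : T.Nonempty) (hprop : ∃ s ∈ K, s ∉ T) (hn : 1 ≤ n) :
    n + 1 ≤ (bnd n K T).card := by
  classical
  obtain ⟨f₀, hf₀⟩ := bnd_nonempty hpm hT hne hprop
  have hcard : f₀.card = n := (mem_bnd.1 hf₀).1
  have hch : ∀ x, ∃ f₁, x ∈ f₀ → f₁ ∈ bnd n K T ∧ f₁ ≠ f₀ ∧ f₀.erase x ⊆ f₁ := by
    intro x
    by_cases hx : x ∈ f₀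
    · obtain ⟨f₁, h1, h2, h3⟩ := bnd_ridge hpm hT hf₀ hx
      exact ⟨f₁, fun _ => ⟨h1, h2, h3⟩⟩
    · exact ⟨∅, fun h => absurd h hx⟩
  choose ff hff using hch
  have hinj : Set.InjOn ff f₀ := by
    intro a ha b hb hab
    by_contra hne'
    have h1 : f₀ ⊆ ff a := by
      intro y hy
      by_cases hya : y = a
      · subst hya
        exact hab ▸ (hff b hb).2.2 (mem_erase.2 ⟨hne', hy⟩)
      · exact (hff a ha).2.2 (mem_erase.2 ⟨hya, hy⟩)
    have h2 : (ff a).card = n := (mem_bnd.1 (hff a ha).1).1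
    exact (hff a ha).2.1 (Finset.eq_of_subset_of_card_le h1 (by omega)).symm
  have hsub : insert f₀ (f₀.image ff) ⊆ bnd n K T := by
    intro f hf
    rcases mem_insert.1 hf with rfl | hf
    · exact hf₀
    · obtain ⟨x, hx, rfl⟩ := mem_image.1 hf
      exact (hff x hx).1
  have hnotmem : f₀ ∉ f₀.image ff := by
    intro h
    obtain ⟨x, hx, hfx⟩ := mem_image.1 h
    exact (hff x hx).2.1 hfx
  calc n + 1 = (insert f₀ (f₀.image ff)).card := by
        rw [card_insert_of_notMem hnotmem, Finset.card_image_of_injOn hinj, hcard]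
    _ ≤ (bnd n K T).card := card_le_card hsub

end Bnd
section Glue
variable {V V₁ V₂ : Type} [DecidableEq V] [Fintype V] [DecidableEq V₁] [Fintype V₁]
  [DecidableEq V₂] [Fintype V₂]

structure GlueHyp (n : ℕ) (K : Finset (Finset V)) (K₁ : Finset (Finset V₁))
    (K₂ : Finset (Finset V₂)) (C₁ : Finset V₁) (C₂ : Finset V₂)
    (φ₁ : V₁ ↪ V) (φ₂ : V₂ ↪ V) : Prop where
  pm1 : IsPseudomanifold n K₁
  pm2 : IsPseudomanifold n K₂
  mem1 : C₁ ∈ K₁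
  mem2 : C₂ ∈ K₂
  glue : C₁.map φ₁ = C₂.map φ₂
  coll : ∀ v₁ : V₁, ∀ v₂ : V₂, φ₁ v₁ = φ₂ v₂ → v₁ ∈ C₁ ∧ v₂ ∈ C₂
  hK : K = (K₁.erase C₁).image (fun s => s.map φ₁) ∪ (K₂.erase C₂).image (fun s => s.map φ₂)

namespace GlueHyp

variable {n : ℕ} {K : Finset (Finset V)} {K₁ : Finset (Finset V₁)} {K₂ : Finset (Finset V₂)}
  {C₁ : Finset V₁} {C₂ : Finset V₂} {φ₁ : V₁ ↪ V} {φ₂ : V₂ ↪ V}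
  (h : GlueHyp n K K₁ K₂ C₁ C₂ φ₁ φ₂)

include h

lemma mem_K1 {s : Finset V₁} (hs : s ∈ K₁) (hne : s ≠ C₁) : s.map φ₁ ∈ K :=
  h.hK ▸ mem_union_left _ (mem_image_of_mem _ (mem_erase.2 ⟨hne, hs⟩))

lemma mem_K2 {u : Finset V₂} (hu : u ∈ K₂) (hne : u ≠ C₂) : u.map φ₂ ∈ K :=
  h.hK ▸ mem_union_right _ (mem_image_of_mem _ (mem_erase.2 ⟨hne, hu⟩))

lemma sub_C1 {s : Finset V₁} {u : Finset V₂} (hsu : s.map φ₁ = u.map φ₂) :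
    s ⊆ C₁ ∧ u ⊆ C₂ := by
  constructor
  · intro x hx
    have : φ₁ x ∈ u.map φ₂ := hsu ▸ mem_map_of_mem φ₁ hx
    obtain ⟨y, -, hy⟩ := Finset.mem_map.1 this
    exact (h.coll x y hy.symm).1
  · intro y hy
    have : φ₂ y ∈ s.map φ₁ := hsu ▸ mem_map_of_mem φ₂ hy
    obtain ⟨x, -, hx⟩ := Finset.mem_map.1 this
    exact (h.coll x y hx).2

lemma eq_C1 {s : Finset V₁} {u : Finset V₂} (hs : s ∈ K₁) (hsu : s.map φ₁ = u.map φ₂) :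
    s = C₁ := by
  refine Finset.eq_of_subset_of_card_le (h.sub_C1 hsu).1 ?_ |>.symm ▸ rfl
  rw [h.pm1.2.1 s hs, h.pm1.2.1 C₁ h.mem1]

lemma eq_C2 {s : Finset V₁} {u : Finset V₂} (hu : u ∈ K₂) (hsu : s.map φ₁ = u.map φ₂) :
    u = C₂ := by
  refine Finset.eq_of_subset_of_card_le (h.sub_C1 hsu).2 ?_ |>.symm ▸ rfl
  rw [h.pm2.2.1 u hu, h.pm2.2.1 C₂ h.mem2]

lemma mem_K_iff {t : Finset V} : t ∈ K ↔
    (∃ s ∈ K₁.erase C₁, t = s.map φ₁) ∨ ∃ u ∈ K₂.erase C₂, t = u.map φ₂ := by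
  rw [h.hK]
  simp only [mem_union, mem_image]
  constructor
  · rintro (⟨s, hs, rfl⟩ | ⟨u, hu, rfl⟩)
    · exact Or.inl ⟨s, hs, rfl⟩
    · exact Or.inr ⟨u, hu, rfl⟩
  · rintro (⟨s, hs, rfl⟩ | ⟨u, hu, rfl⟩)
    · exact Or.inl ⟨s, hs, rfl⟩
    · exact Or.inr ⟨u, hu, rfl⟩

lemma facet_glue {f : Finset V₁} (hf : f ⊆ C₁) :
    ∃ g : Finset V₂, g ⊆ C₂ ∧ g.card = f.card ∧ g.map φ₂ = f.map φ₁ := by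
  have h1 : f.map φ₁ ⊆ C₂.map φ₂ := h.glue ▸ map_subset_map.2 hf
  obtain ⟨g, hg, hg2⟩ := Finset.subset_map_iff.1 h1
  have hc := congrArg Finset.card hg2
  rw [card_map, card_map] at hc
  exact ⟨g, hg, hc.symm, hg2.symm⟩

lemma other₂ {g : Finset V₂} (hg : g ⊆ C₂) (hgc : g.card = n) :
    ∃ u, u ∈ K₂ ∧ u ≠ C₂ ∧ g ⊆ u ∧ ∀ w ∈ K₂, g ⊆ w → w = C₂ ∨ w = u := by
  classical
  have hcard : (K₂.filter (fun s => g ⊆ s)).card = 2 :=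
    h.pm2.2.2.1 g hgc ⟨C₂, h.mem2, hg⟩
  have hC2mem : C₂ ∈ K₂.filter (fun s => g ⊆ s) := mem_filter.2 ⟨h.mem2, hg⟩
  have herase : ((K₂.filter (fun s => g ⊆ s)).erase C₂).card = 1 := by
    rw [card_erase_of_mem hC2mem, hcard]
  obtain ⟨u, hu⟩ := Finset.card_eq_one.1 herase
  have humem : u ∈ (K₂.filter (fun s => g ⊆ s)).erase C₂ := hu ▸ mem_singleton_self u
  obtain ⟨hune, humem'⟩ := mem_erase.1 humem
  rw [mem_filter] at humem'
  refine ⟨u, humem'.1, hune, humem'.2, fun w hw hgw => ?_⟩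
  by_cases hwC : w = C₂
  · exact Or.inl hwC
  · refine Or.inr ?_
    have : w ∈ (K₂.filter (fun s => g ⊆ s)).erase C₂ :=
      mem_erase.2 ⟨hwC, mem_filter.2 ⟨hw, hgw⟩⟩
    rw [hu, mem_singleton] at this
    exact this

/-- core counting lemma, case where `C₁` is not yet in the sublevel set. -/
lemma core0 (hn : 1 ≤ n) {A : Finset (Finset V₁)} {S : Finset (Finset V)}
    (hA : A ⊆ K₁) (hC₁ : C₁ ∉ A)
    (hi : ∀ s ∈ K₁, s ≠ C₁ → (s ∈ A ↔ s.map φ₁ ∈ S))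
    (hprop : ∃ u ∈ K₂, u ≠ C₂ ∧ u.map φ₂ ∉ S) :
    (bnd n K₁ A).card ≤ (bnd n K S).card := by
  classical
  set B := (K₂.erase C₂).filter (fun u => u.map φ₂ ∈ S) with hB
  set T₂ := insert C₂ B with hT₂
  have hgch : ∀ f : Finset V₁, ∃ g : Finset V₂,
      f ⊆ C₁ → (g ⊆ C₂ ∧ g.card = f.card ∧ g.map φ₂ = f.map φ₁) := by
    intro f
    by_cases hf : f ⊆ C₁
    · obtain ⟨g, h1, h2, h3⟩ := h.facet_glue hf
      exact ⟨g, fun _ => ⟨h1, h2, h3⟩⟩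
    · exact ⟨∅, fun hf' => absurd hf' hf⟩
  choose gf hgf using hgch
  have huch : ∀ g : Finset V₂, ∃ u, (g ⊆ C₂ ∧ g.card = n) →
      (u ∈ K₂ ∧ u ≠ C₂ ∧ g ⊆ u ∧ ∀ w ∈ K₂, g ⊆ w → w = C₂ ∨ w = u) := by
    intro g
    by_cases hg : g ⊆ C₂ ∧ g.card = n
    · obtain ⟨u, h1, h2, h3, h4⟩ := h.other₂ hg.1 hg.2
      exact ⟨u, fun _ => ⟨h1, h2, h3, h4⟩⟩
    · exact ⟨∅, fun hg' => absurd hg' hg⟩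
  choose uf huf using huch
  set P0 := (bnd n K₁ A).filter (fun f => ¬ f ⊆ C₁) with hP0
  set PC := (bnd n K₁ A).filter (fun f => f ⊆ C₁) with hPC
  set P2 := PC.filter (fun f => uf (gf f) ∈ B) with hP2
  set P1 := PC.filter (fun f => ¬ uf (gf f) ∈ B) with hP1
  -- properties of PC members
  have hPCprop : ∀ f ∈ PC, f ⊆ C₁ ∧ f.card = n ∧ gf f ⊆ C₂ ∧ (gf f).card = n ∧
      (gf f).map φ₂ = f.map φ₁ := by
    intro f hf
    rw [hPC, mem_filter] at hf
    obtain ⟨g1, g2, g3⟩ := hgf f hf.2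
    exact ⟨hf.2, (mem_bnd.1 hf.1).1, g1, by rw [g2, (mem_bnd.1 hf.1).1], g3⟩
  have hufprop : ∀ f ∈ PC, uf (gf f) ∈ K₂ ∧ uf (gf f) ≠ C₂ ∧ gf f ⊆ uf (gf f) ∧
      ∀ w ∈ K₂, gf f ⊆ w → w = C₂ ∨ w = uf (gf f) := by
    intro f hf
    obtain ⟨-, -, g1, g2, -⟩ := hPCprop f hf
    exact huf (gf f) ⟨g1, g2⟩
  set Q0 := P0.image (fun f => f.map φ₁) with hQ0
  set Q1 := P1.image (fun f => f.map φ₁) with hQ1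
  set NS := (bnd n K₂ T₂).filter (fun g => ¬ g ⊆ C₂) with hNS
  set Sph := (bnd n K₂ T₂).filter (fun g => g ⊆ C₂) with hSph
  set Q2 := NS.image (fun g => g.map φ₂) with hQ2
  -- splitting
  have hs1 : PC.card + P0.card = (bnd n K₁ A).card :=
    Finset.card_filter_add_card_filter_not (s := bnd n K₁ A) (p := fun f => f ⊆ C₁)
  have hs2 : P2.card + P1.card = PC.card :=
    Finset.card_filter_add_card_filter_not (s := PC) (p := fun f => uf (gf f) ∈ B)
  -- Q0 ⊆ bnd n K S
  have hQ0sub : Q0 ⊆ bnd n K S := by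
    intro F hF
    rw [hQ0, mem_image] at hF
    obtain ⟨f, hf, rfl⟩ := hF
    rw [hP0, mem_filter] at hf
    obtain ⟨hfb, hfC⟩ := hf
    obtain ⟨hfc, ⟨s, hsA, hfs⟩, ⟨s', hs'K, hs'A, hfs'⟩⟩ := mem_bnd.1 hfb
    have hsC : s ≠ C₁ := fun hh => hC₁ (hh ▸ hsA)
    have hs'C : s' ≠ C₁ := fun hh => hfC (hh ▸ hfs')
    refine mem_bnd.2 ⟨by rw [card_map, hfc], ?_, ?_⟩
    · exact ⟨s.map φ₁, (hi s (hA hsA) hsC).1 hsA, map_subset_map.2 hfs⟩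
    · exact ⟨s'.map φ₁, h.mem_K1 hs'K hs'C,
        fun hm => hs'A ((hi s' hs'K hs'C).2 hm), map_subset_map.2 hfs'⟩
  -- Q1 ⊆ bnd n K S
  have hQ1sub : Q1 ⊆ bnd n K S := by
    intro F hF
    rw [hQ1, mem_image] at hF
    obtain ⟨f, hf, rfl⟩ := hF
    rw [hP1, mem_filter] at hf
    obtain ⟨hfPC, hufB⟩ := hf
    obtain ⟨hfC, hfc, hgC, hgc, hgeq⟩ := hPCprop f hfPC
    obtain ⟨huK, huC, hgu, -⟩ := hufprop f hfPC
    rw [hPC, mem_filter] at hfPC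
    obtain ⟨hfc', ⟨s, hsA, hfs⟩, -⟩ := mem_bnd.1 hfPC.1
    have hsC : s ≠ C₁ := fun hh => hC₁ (hh ▸ hsA)
    refine mem_bnd.2 ⟨by rw [card_map, hfc], ?_, ?_⟩
    · exact ⟨s.map φ₁, (hi s (hA hsA) hsC).1 hsA, map_subset_map.2 hfs⟩
    · refine ⟨(uf (gf f)).map φ₂, h.mem_K2 huK huC, ?_, ?_⟩
      · intro hm
        exact hufB (mem_filter.2 ⟨mem_erase.2 ⟨huC, huK⟩, hm⟩)
      · rw [← hgeq]
        exact map_subset_map.2 hgu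
  -- Q2 ⊆ bnd n K S
  have hQ2sub : Q2 ⊆ bnd n K S := by
    intro F hF
    rw [hQ2, mem_image] at hF
    obtain ⟨g, hg, rfl⟩ := hF
    rw [hNS, mem_filter] at hg
    obtain ⟨hgb, hgC⟩ := hg
    obtain ⟨hgc, ⟨v, hvT, hgv⟩, ⟨w, hwK, hwT, hgw⟩⟩ := mem_bnd.1 hgb
    have hvB : v ∈ B := by
      rcases mem_insert.1 hvT with rfl | hv
      · exact absurd hgv hgC
      · exact hv
    rw [hB, mem_filter] at hvB
    have hwC : w ≠ C₂ := fun hh => hwT (hh ▸ mem_insert_self C₂ B)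
    have hwB : w.map φ₂ ∉ S := by
      intro hm
      exact hwT (mem_insert_of_mem (mem_filter.2 ⟨mem_erase.2 ⟨hwC, hwK⟩, hm⟩))
    refine mem_bnd.2 ⟨by rw [card_map, hgc], ?_, ?_⟩
    · exact ⟨v.map φ₂, hvB.2, map_subset_map.2 hgv⟩
    · exact ⟨w.map φ₂, h.mem_K2 hwK hwC, hwB, map_subset_map.2 hgw⟩
  -- disjointness
  have hd01 : Disjoint Q0 Q1 := by
    rw [Finset.disjoint_left]
    intro F hF0 hF1
    rw [hQ0, mem_image] at hF0
    rw [hQ1, mem_image] at hF1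
    obtain ⟨f, hf, rfl⟩ := hF0
    obtain ⟨f', hf', heq⟩ := hF1
    have : f' = f := Finset.map_injective φ₁ heq
    subst this
    rw [hP0, mem_filter] at hf
    rw [hP1, mem_filter] at hf'
    exact hf.2 (hPCprop f' hf'.1).1
  have hd02 : Disjoint Q0 Q2 := by
    rw [Finset.disjoint_left]
    intro F hF0 hF2
    rw [hQ0, mem_image] at hF0
    rw [hQ2, mem_image] at hF2
    obtain ⟨f, hf, rfl⟩ := hF0
    obtain ⟨g, hg, heq⟩ := hF2
    rw [hP0, mem_filter] at hf
    exact hf.2 (h.sub_C1 heq.symm).1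
  have hd12 : Disjoint Q1 Q2 := by
    rw [Finset.disjoint_left]
    intro F hF1 hF2
    rw [hQ1, mem_image] at hF1
    rw [hQ2, mem_image] at hF2
    obtain ⟨f, hf, rfl⟩ := hF1
    obtain ⟨g, hg, heq⟩ := hF2
    rw [hP1, mem_filter] at hf
    obtain ⟨-, -, hgC, -, hgeq⟩ := hPCprop f hf.1
    have : g = gf f := Finset.map_injective φ₂ (heq.trans hgeq.symm)
    rw [hNS, mem_filter] at hg
    exact hg.2 (this ▸ hgC)
  -- |P2| ≤ |NS| via the isoperimetric inequality
  have hT2sub : T₂ ⊆ K₂ := by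
    intro u hu
    rcases mem_insert.1 hu with rfl | hu
    · exact h.mem2
    · exact mem_of_mem_erase (mem_filter.1 hu).1
  have hT2ne : T₂.Nonempty := ⟨C₂, mem_insert_self _ _⟩
  have hT2prop : ∃ u ∈ K₂, u ∉ T₂ := by
    obtain ⟨u, huK, huC, huS⟩ := hprop
    refine ⟨u, huK, fun hu => ?_⟩
    rcases mem_insert.1 hu with rfl | hu
    · exact huC rfl
    · exact huS (mem_filter.1 hu).2
  have hiso : n + 1 ≤ (bnd n K₂ T₂).card := iso_card h.pm2 hT2sub hT2ne hT2prop hn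
  have hbndsplit : Sph.card + NS.card = (bnd n K₂ T₂).card :=
    Finset.card_filter_add_card_filter_not (s := bnd n K₂ T₂) (p := fun g => g ⊆ C₂)
  have hP2NS : P2.card ≤ NS.card := by
    have hinj : Set.InjOn gf P2 := by
      intro a ha b hb hab
      have h1 := (hPCprop a (mem_filter.1 ha).1).2.2.2.2
      have h2 := (hPCprop b (mem_filter.1 hb).1).2.2.2.2
      refine Finset.map_injective φ₁ ?_
      rw [← h1, ← h2, hab]
    have himg : P2.image gf ⊆ simFacets n C₂ := by
      intro g hg
      obtain ⟨f, hf, rfl⟩ := mem_image.1 hg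
      obtain ⟨-, -, hgC, hgc, -⟩ := hPCprop f (mem_filter.1 hf).1
      exact Finset.mem_powersetCard.2 ⟨hgC, hgc⟩
    have hdisj : Disjoint (P2.image gf) Sph := by
      rw [Finset.disjoint_left]
      intro g hg hgSph
      obtain ⟨f, hf, rfl⟩ := mem_image.1 hg
      obtain ⟨huK, huC, hgu, -⟩ := hufprop f (mem_filter.1 hf).1
      rw [hSph, mem_filter] at hgSph
      obtain ⟨hgb, hgC2⟩ := hgSph
      obtain ⟨-, -, ⟨w, hwK, hwT, hgw⟩⟩ := mem_bnd.1 hgb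
      have hwC : w ≠ C₂ := fun hh => hwT (hh ▸ mem_insert_self C₂ B)
      have := (hufprop f (mem_filter.1 hf).1).2.2.2 w hwK hgw
      rcases this with hh | hh
      · exact hwC hh
      · subst hh
        exact hwT (mem_insert_of_mem (mem_filter.1 hf).2)
    have hcardsum : P2.card + Sph.card ≤ n + 1 := by
      have h1 : (P2.image gf).card = P2.card := Finset.card_image_of_injOn hinj
      have h2 : (P2.image gf ∪ Sph).card = P2.card + Sph.card := by
        rw [Finset.card_union_of_disjoint hdisj, h1]
      have h3 : P2.image gf ∪ Sph ⊆ simFacets n C₂ := by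
        refine Finset.union_subset himg ?_
        intro g hg
        rw [hSph, mem_filter] at hg
        exact Finset.mem_powersetCard.2 ⟨hg.2, (mem_bnd.1 hg.1).1⟩
      have h4 : (simFacets n C₂).card = n + 1 := by
        rw [simFacets, Finset.card_powersetCard, h.pm2.2.1 C₂ h.mem2,
          Nat.choose_succ_self_right]
      calc P2.card + Sph.card = (P2.image gf ∪ Sph).card := h2.symm
        _ ≤ (simFacets n C₂).card := card_le_card h3
        _ = n + 1 := h4
    omega
  -- assemble
  have hQcards : Q0.card + Q1.card + Q2.card ≤ (bnd n K S).card := by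
    have hsub : Q0 ∪ Q1 ∪ Q2 ⊆ bnd n K S :=
      Finset.union_subset (Finset.union_subset hQ0sub hQ1sub) hQ2sub
    have : (Q0 ∪ Q1 ∪ Q2).card = Q0.card + Q1.card + Q2.card := by
      rw [Finset.card_union_of_disjoint, Finset.card_union_of_disjoint hd01]
      rw [Finset.disjoint_union_left]
      exact ⟨hd02, hd12⟩
    rw [← this]
    exact card_le_card hsub
  have hc0 : Q0.card = P0.card :=
    Finset.card_image_of_injOn (fun a _ b _ hab => Finset.map_injective φ₁ hab)
  have hc1 : Q1.card = P1.card :=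
    Finset.card_image_of_injOn (fun a _ b _ hab => Finset.map_injective φ₁ hab)
  have hc2 : Q2.card = NS.card :=
    Finset.card_image_of_injOn (fun a _ b _ hab => Finset.map_injective φ₂ hab)
  omega

/-- core counting lemma, case where `C₁` is already in the sublevel set and the
`K₂`-side is complete. -/
lemma core1 {A : Finset (Finset V₁)} {S : Finset (Finset V)}
    (hA : A ⊆ K₁) (hC₁ : C₁ ∈ A)
    (hi : ∀ s ∈ K₁, s ≠ C₁ → (s ∈ A ↔ s.map φ₁ ∈ S))
    (hful : ∀ u ∈ K₂, u ≠ C₂ → u.map φ₂ ∈ S) :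
    (bnd n K₁ A).card ≤ (bnd n K S).card := by
  classical
  refine Finset.card_le_card_of_injOn (fun f => f.map φ₁) ?_
    (fun a _ b _ hab => Finset.map_injective φ₁ hab)
  intro f hf
  obtain ⟨hfc, ⟨s, hsA, hfs⟩, ⟨s', hs'K, hs'A, hfs'⟩⟩ := mem_bnd.1 hf
  have hs'C : s' ≠ C₁ := fun hh => hs'A (hh ▸ hC₁)
  refine mem_bnd.2 ⟨by rw [card_map, hfc], ?_, ⟨s'.map φ₁, h.mem_K1 hs'K hs'C,
    fun hm => hs'A ((hi s' hs'K hs'C).2 hm), map_subset_map.2 hfs'⟩⟩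
  by_cases hsC : s = C₁
  · subst hsC
    obtain ⟨g, hgC, hgc, hgeq⟩ := h.facet_glue (hfs.trans (le_refl s))
    obtain ⟨u, huK, huC, hgu, -⟩ := h.other₂ hgC (by rw [hgc, hfc])
    refine ⟨u.map φ₂, hful u huK huC, ?_⟩
    show Finset.map φ₁ f ⊆ Finset.map φ₂ u
    rw [← hgeq]
    exact map_subset_map.2 hgu
  · exact ⟨s.map φ₁, (hi s (hA hsA) hsC).1 hsA, map_subset_map.2 hfs⟩

end GlueHyp

end Glue


section Helpers
variable {V : Type} [DecidableEq V] [Fintype V]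

lemma plevel_eq_bnd (n : ℕ) (K : Finset (Finset V)) {N : ℕ}
    (O : Fin N ≃ {s : Finset V // s ∈ K}) (j : ℕ) :
    plevel n K O j = bnd n K (psub K O j) := rfl

lemma mem_psub_iff {K : Finset (Finset V)} {N : ℕ} {O : Fin N ≃ {s : Finset V // s ∈ K}}
    {j : ℕ} {s : Finset V} :
    s ∈ psub K O j ↔ ∃ k : Fin N, (k : ℕ) < j ∧ (O k).val = s := by
  simp only [psub, mem_image, mem_filter, mem_univ, true_and]
  constructor
  · rintro ⟨k, hk, rfl⟩; exact ⟨k, by omega, rfl⟩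
  · rintro ⟨k, hk, rfl⟩; exact ⟨k, by omega, rfl⟩

lemma psub_subset {K : Finset (Finset V)} {N : ℕ} {O : Fin N ≃ {s : Finset V // s ∈ K}}
    {j : ℕ} : psub K O j ⊆ K := by
  intro s hs
  obtain ⟨k, -, rfl⟩ := mem_psub_iff.1 hs
  exact (O k).2

lemma mem_psub_of_mem {K : Finset (Finset V)} {N : ℕ} {O : Fin N ≃ {s : Finset V // s ∈ K}}
    {j : ℕ} {s : Finset V} (hs : s ∈ K) :
    s ∈ psub K O j ↔ ((O.symm ⟨s, hs⟩ : Fin N) : ℕ) < j := by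
  rw [mem_psub_iff]
  constructor
  · rintro ⟨k, hk, hks⟩
    have : O k = ⟨s, hs⟩ := Subtype.ext hks
    rw [← this, Equiv.symm_apply_apply]
    exact hk
  · intro hk
    exact ⟨O.symm ⟨s, hs⟩, hk, by rw [Equiv.apply_symm_apply]⟩

lemma ptrunk_le {n : ℕ} {K : Finset (Finset V)} (O : Fin K.card ≃ {s : Finset V // s ∈ K}) :
    ptrunk n K ≤ ptrunkOrd n K O :=
  Nat.sInf_le ⟨O, rfl⟩

lemma ptrunk_exists (n : ℕ) (K : Finset (Finset V)) :
    ∃ O : Fin K.card ≃ {s : Finset V // s ∈ K}, ptrunkOrd n K O = ptrunk n K := by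
  have hne : {t : ℕ | ∃ O : Fin K.card ≃ {s : Finset V // s ∈ K}, ptrunkOrd n K O = t}.Nonempty := by
    refine ⟨_, (Fintype.equivFinOfCardEq (Fintype.card_coe K)).symm, rfl⟩
  exact Nat.sInf_mem hne

lemma pLam_le_ptrunkOrd {n : ℕ} {K : Finset (Finset V)} {N : ℕ}
    (O : Fin N ≃ {s : Finset V // s ∈ K}) {j : ℕ} (hj : j ≤ N) :
    pLam n K O j ≤ ptrunkOrd n K O :=
  Finset.le_sup (mem_range.2 (by omega))

end Helpers

section FinHelp

lemma finset_down_closed_iff {m : ℕ} {S : Finset (Fin m)}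
    (hdc : ∀ i j : Fin m, i ≤ j → j ∈ S → i ∈ S) {p : ℕ} (hp : S.card = p) (i : Fin m) :
    i ∈ S ↔ (i : ℕ) < p := by
  constructor
  · intro hi
    have hsub : Finset.Iic i ⊆ S := fun j hj => hdc j i (Finset.mem_Iic.1 hj) hi
    have := card_le_card hsub
    rw [Fin.card_Iic, hp] at this
    omega
  · intro hi
    by_contra hiS
    have hsub : S ⊆ Finset.Iio i := by
      intro j hj
      rw [Finset.mem_Iio]
      by_contra hij
      push_neg at hij
      exact hiS (hdc i j hij hj)
    have := card_le_card hsub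
    rw [Fin.card_Iio, hp] at this
    omega

lemma orderIsoOfFin_lt_iff {N m : ℕ} (I : Finset (Fin N)) (hI : I.card = m) (T : Fin N)
    (i : Fin m) :
    ((I.orderIsoOfFin hI i : Fin N) < T) ↔ (i : ℕ) < (I.filter (fun k => k < T)).card := by
  classical
  set σ := I.orderIsoOfFin hI with hσ
  set S : Finset (Fin m) := Finset.univ.filter (fun j => ((σ j : Fin N) < T)) with hS
  have hdc : ∀ i j : Fin m, i ≤ j → j ∈ S → i ∈ S := by
    intro i j hij hj
    rw [hS, mem_filter] at hj ⊢
    refine ⟨mem_univ _, lt_of_le_of_lt ?_ hj.2⟩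
    exact Subtype.coe_le_coe.2 (σ.monotone hij)
  have hcard : S.card = (I.filter (fun k => k < T)).card := by
    refine Finset.card_bij (fun j _ => (σ j : Fin N)) ?_ ?_ ?_
    · intro j hj
      rw [mem_filter]
      exact ⟨(σ j).2, (mem_filter.1 hj).2⟩
    · intro a ha b hb hab
      have : σ a = σ b := Subtype.ext hab
      exact σ.injective this
    · intro k hk
      rw [mem_filter] at hk
      refine ⟨σ.symm ⟨k, hk.1⟩, ?_, by simp⟩
      rw [hS, mem_filter]
      refine ⟨mem_univ _, ?_⟩
      simp only [OrderIso.apply_symm_apply]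
      exact hk.2
  have := finset_down_closed_iff hdc hcard i
  rw [hS, mem_filter] at this
  rw [← this]
  simp

end FinHelp
section Lower
variable {V V₁ V₂ : Type} [DecidableEq V] [Fintype V] [DecidableEq V₁] [Fintype V₁]
  [DecidableEq V₂] [Fintype V₂]

lemma GlueHyp.trunk_le {n : ℕ} {K : Finset (Finset V)} {K₁ : Finset (Finset V₁)}
    {K₂ : Finset (Finset V₂)} {C₁ : Finset V₁} {C₂ : Finset V₂} {φ₁ : V₁ ↪ V} {φ₂ : V₂ ↪ V}
    (h : GlueHyp n K K₁ K₂ C₁ C₂ φ₁ φ₂) (hn : 1 ≤ n) :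
    ptrunk n K₁ ≤ ptrunk n K := by
  classical
  set N := K.card with hN
  obtain ⟨O, hO⟩ := ptrunk_exists n K
  set N₁ := K₁.card with hN₁
  have hN₁pos : 1 ≤ N₁ := card_pos.2 ⟨C₁, h.mem1⟩
  -- K₂ has a simplex other than C₂
  have hK₂two : ∃ u ∈ K₂, u ≠ C₂ := by
    have hCne : C₂.Nonempty := by
      rw [← card_pos, h.pm2.2.1 C₂ h.mem2]; omega
    obtain ⟨x, hx⟩ := hCne
    have hfc : (C₂.erase x).card = n := by
      rw [card_erase_of_mem hx, h.pm2.2.1 C₂ h.mem2]; omega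
    have h2 := h.pm2.2.2.1 (C₂.erase x) hfc ⟨C₂, h.mem2, erase_subset x C₂⟩
    have hC2f : C₂ ∈ K₂.filter (fun s => C₂.erase x ⊆ s) :=
      mem_filter.2 ⟨h.mem2, erase_subset x C₂⟩
    have h1 : ((K₂.filter (fun s => C₂.erase x ⊆ s)).erase C₂).card = 1 := by
      rw [card_erase_of_mem hC2f, h2]
    obtain ⟨u, hu⟩ := Finset.card_eq_one.1 h1
    have := hu ▸ mem_singleton_self u
    obtain ⟨h3, h4⟩ := mem_erase.1 this
    exact ⟨u, (mem_filter.1 h4).1, h3⟩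
  set K₁' := (K₁.erase C₁).image (fun s => s.map φ₁) with hK₁'
  set K₂' := (K₂.erase C₂).image (fun s => s.map φ₂) with hK₂'
  set I₁ : Finset (Fin N) := univ.filter (fun k => (O k).val ∈ K₁') with hI₁
  set I₂ : Finset (Fin N) := univ.filter (fun k => (O k).val ∈ K₂') with hI₂
  have hI₁card : I₁.card = N₁ - 1 := by
    have h1 : I₁.card = K₁'.card := by
      refine Finset.card_bij (fun k _ => (O k).val) ?_ ?_ ?_
      · intro k hk; exact (mem_filter.1 hk).2
      · intro a _ b _ hab
        exact O.injective (Subtype.ext hab)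
      · intro t ht
        have htK : t ∈ K := h.hK ▸ mem_union_left _ ht
        exact ⟨O.symm ⟨t, htK⟩, mem_filter.2 ⟨mem_univ _, by simp [ht]⟩, by simp⟩
    rw [h1, hK₁', Finset.card_image_of_injOn (fun a _ b _ hab => Finset.map_injective φ₁ hab),
      card_erase_of_mem h.mem1, ← hN₁]
  set σ := I₁.orderIsoOfFin hI₁card with hσ
  set σc : Fin (N₁ - 1) → Fin N := fun i => ((σ i : {x // x ∈ I₁}) : Fin N) with hσc
  have hσcI : ∀ i, σc i ∈ I₁ := fun i => (σ i).2
  have hσle : ∀ a b : Fin (N₁ - 1), σc a ≤ σc b ↔ a ≤ b := by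
    intro a b
    constructor
    · intro hab
      exact σ.le_iff_le.1 (Subtype.coe_le_coe.1 hab)
    · intro hab
      exact Subtype.coe_le_coe.2 (σ.le_iff_le.2 hab)
  have hσinj : ∀ a b : Fin (N₁ - 1), σc a = σc b → a = b :=
    fun a b hab => σ.injective (Subtype.ext hab)
  have hdisjI : ∀ k : Fin N, k ∈ I₁ → k ∈ I₂ → False := by
    intro k hk1 hk2
    rw [hI₁, mem_filter] at hk1
    rw [hI₂, mem_filter] at hk2
    obtain ⟨s, hs, hseq⟩ := mem_image.1 hk1.2
    obtain ⟨u, hu, hueq⟩ := mem_image.1 hk2.2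
    exact (ne_of_mem_erase hs) (h.eq_C1 (mem_of_mem_erase hs) (hseq.trans hueq.symm))
  have hI₂ne : I₂.Nonempty := by
    obtain ⟨u, huK, huC⟩ := hK₂two
    have : u.map φ₂ ∈ K := h.mem_K2 huK huC
    refine ⟨O.symm ⟨u.map φ₂, this⟩, mem_filter.2 ⟨mem_univ _, ?_⟩⟩
    simp only [Equiv.apply_symm_apply]
    exact mem_image_of_mem _ (mem_erase.2 ⟨huC, huK⟩)
  set T := I₂.max' hI₂ne with hT
  set p := (I₁.filter (fun k => k < T)).card with hp
  have hple : p ≤ N₁ - 1 := by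
    rw [hp, ← hI₁card]
    exact card_le_card (filter_subset _ _)
  have hF1 : ∀ i : Fin (N₁ - 1), (i : ℕ) < p ↔ σc i < T :=
    fun i => (orderIsoOfFin_lt_iff I₁ hI₁card T i).symm
  -- pull: preimage in K₁ of a K₁-side simplex
  have hpullex : ∀ k : Fin N, ∃ s : Finset V₁, k ∈ I₁ →
      (s ∈ K₁.erase C₁ ∧ (O k).val = s.map φ₁) := by
    intro k
    by_cases hk : k ∈ I₁
    · rw [hI₁, mem_filter] at hk
      obtain ⟨s, hs, hseq⟩ := mem_image.1 hk.2
      exact ⟨s, fun _ => ⟨hs, hseq.symm⟩⟩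
    · exact ⟨∅, fun hk' => absurd hk' hk⟩
  choose pull hpull using hpullex
  -- rank of a K₁-simplex
  have hriex : ∀ s : Finset V₁, ∃ r : ℕ, s ∈ K₁.erase C₁ →
      ∃ hr : r < N₁ - 1, (O (σc ⟨r, hr⟩)).val = s.map φ₁ := by
    intro s
    by_cases hs : s ∈ K₁.erase C₁
    · have hmem : s.map φ₁ ∈ K := h.mem_K1 (mem_of_mem_erase hs) (ne_of_mem_erase hs)
      set k := O.symm ⟨s.map φ₁, hmem⟩ with hk
      have hkI : k ∈ I₁ := by
        refine mem_filter.2 ⟨mem_univ _, ?_⟩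
        rw [hk]
        simp only [Equiv.apply_symm_apply]
        exact mem_image_of_mem _ hs
      refine ⟨σ.symm ⟨k, hkI⟩, fun _ => ⟨(σ.symm ⟨k, hkI⟩).isLt, ?_⟩⟩
      have : (⟨(σ.symm ⟨k, hkI⟩ : Fin (N₁ -1)), (σ.symm ⟨k, hkI⟩).isLt⟩ : Fin (N₁ - 1))
          = σ.symm ⟨k, hkI⟩ := by
        apply Fin.ext; rfl
      rw [hσc]
      simp only [this, OrderIso.apply_symm_apply]
      rw [hk]
      simp
    · exact ⟨0, fun hs' => absurd hs' hs⟩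
  choose ri hri using hriex
  -- uniqueness of rank
  have hriuniq : ∀ (r : ℕ) (hr : r < N₁ - 1) (s : Finset V₁) (hs : s ∈ K₁.erase C₁),
      (O (σc ⟨r, hr⟩)).val = s.map φ₁ → r = ri s := by
    intro r hr s hs heq
    obtain ⟨hr', heq'⟩ := hri s hs
    have : (O (σc ⟨r, hr⟩)) = (O (σc ⟨ri s, hr'⟩)) := Subtype.ext (heq.trans heq'.symm)
    have := hσinj _ _ (O.injective this)
    exact congrArg Fin.val this
  set idx : Finset V₁ → ℕ := fun s => if ri s < p then ri s else ri s + 1 with hidx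
  have hidxs : ∀ s, idx s = if ri s < p then ri s else ri s + 1 := fun s => rfl
  have hidxlt : ∀ s ∈ K₁.erase C₁, idx s < N₁ := by
    intro s hs
    obtain ⟨hr, -⟩ := hri s hs
    rw [hidxs s]
    split <;> omega
  -- the induced ordering of K₁
  have hig : ∀ i : Fin N₁, (i : ℕ) < p → (i : ℕ) < N₁ - 1 := fun i hi => lt_of_lt_of_le hi hple
  have hig2 : ∀ i : Fin N₁, ¬ (i : ℕ) < p → (i : ℕ) ≠ p → (i : ℕ) - 1 < N₁ - 1 := by
    intro i h1 h2
    have := i.isLt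
    omega
  set g₁ : Fin N₁ → {s : Finset V₁ // s ∈ K₁} := fun i =>
    if hi : (i : ℕ) < p then
      ⟨pull (σc ⟨(i : ℕ), hig i hi⟩),
        mem_of_mem_erase ((hpull _ (hσcI _)).1)⟩
    else if hi2 : (i : ℕ) = p then ⟨C₁, h.mem1⟩
    else ⟨pull (σc ⟨(i : ℕ) - 1, hig2 i hi hi2⟩),
        mem_of_mem_erase ((hpull _ (hσcI _)).1)⟩
    with hg₁
  -- bridge: value of pull determines rank
  have hbridge : ∀ (r : ℕ) (hr : r < N₁ - 1) (s : Finset V₁) (hs : s ∈ K₁.erase C₁),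
      (pull (σc ⟨r, hr⟩) = s ↔ r = ri s) := by
    intro r hr s hs
    obtain ⟨hpm, hpeq⟩ := hpull (σc ⟨r, hr⟩) (hσcI _)
    constructor
    · intro he
      exact hriuniq r hr s hs (by rw [hpeq, he])
    · intro he
      obtain ⟨hr', heq'⟩ := hri s hs
      have hee : σc ⟨r, hr⟩ = σc ⟨ri s, hr'⟩ := by congr 1; exact Fin.ext he
      refine Finset.map_injective φ₁ ?_
      rw [← hpeq, hee, heq']
  have hgC : ∀ i : Fin N₁, ((g₁ i).val = C₁ ↔ (i : ℕ) = p) := by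
    intro i
    simp only [hg₁]
    split
    · rename_i hi
      simp only []
      constructor
      · intro he
        exact absurd (he ▸ (hpull _ (hσcI _)).1) (notMem_erase C₁ K₁)
      · intro he; omega
    · split
      · rename_i hi2
        simp only [hi2, iff_true]
      · rename_i hi hi2
        simp only []
        constructor
        · intro he
          exact absurd (he ▸ (hpull _ (hσcI _)).1) (notMem_erase C₁ K₁)
        · intro he; exact absurd he hi2
  have hgA : ∀ (i : Fin N₁) (s : Finset V₁), s ∈ K₁.erase C₁ →
      ((g₁ i).val = s ↔ (i : ℕ) = idx s) := by
    intro i s hs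
    obtain ⟨hrs, -⟩ := hri s hs
    simp only [hg₁]
    split
    · rename_i hi
      simp only []
      rw [hbridge _ _ s hs, hidxs s]
      constructor
      · intro he; rw [if_pos (he ▸ hi)]; omega
      · intro he
        split at he <;> omega
    · split
      · rename_i hi hi2
        simp only []
        constructor
        · intro he; exact absurd he.symm (ne_of_mem_erase hs)
        · intro he
          rw [hidxs s] at he
          split at he <;> omega
      · rename_i hi hi2
        simp only []
        rw [hbridge _ _ s hs, hidxs s]
        constructor
        · intro he
          have hnp : ¬ ri s < p := by omega
          rw [if_neg hnp]; omega
        · intro he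
          split at he <;> omega
  -- g₁ is a bijection
  have hg₁inj : Function.Injective g₁ := by
    intro a b hab
    by_cases hC : (g₁ a).val = C₁
    · have h1 := (hgC a).1 hC
      have h2 := (hgC b).1 (hab ▸ hC)
      exact Fin.ext (h1.trans h2.symm)
    · have hmem : (g₁ a).val ∈ K₁.erase C₁ := mem_erase.2 ⟨hC, (g₁ a).2⟩
      have h1 := (hgA a _ hmem).1 rfl
      have h2 := (hgA b _ hmem).1 (by rw [← hab])
      exact Fin.ext (h1.trans h2.symm)
  have hcardeq : Fintype.card (Fin N₁) = Fintype.card {s : Finset V₁ // s ∈ K₁} := by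
    rw [Fintype.card_fin, Fintype.card_coe]
  set O₁ : Fin N₁ ≃ {s : Finset V₁ // s ∈ K₁} :=
    Equiv.ofBijective g₁ ((Fintype.bijective_iff_injective_and_card g₁).2 ⟨hg₁inj, hcardeq⟩)
    with hO₁
  have hO₁app : ∀ i, O₁ i = g₁ i := fun i => rfl
  -- sublevel characterizations for O₁
  have hps1 : ∀ (j : ℕ) (s : Finset V₁), s ∈ K₁.erase C₁ →
      (s ∈ psub K₁ O₁ j ↔ idx s < j) := by
    intro j s hs
    rw [mem_psub_iff]
    constructor
    · rintro ⟨i, hij, hiv⟩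
      rw [hO₁app] at hiv
      have := (hgA i s hs).1 hiv
      omega
    · intro hj
      refine ⟨⟨idx s, hidxlt s hs⟩, hj, ?_⟩
      rw [hO₁app]
      exact (hgA _ s hs).2 rfl
  have hpsC : ∀ j : ℕ, (C₁ ∈ psub K₁ O₁ j ↔ p < j) := by
    intro j
    rw [mem_psub_iff]
    constructor
    · rintro ⟨i, hij, hiv⟩
      rw [hO₁app] at hiv
      have := (hgC i).1 hiv
      omega
    · intro hj
      refine ⟨⟨p, by omega⟩, hj, ?_⟩
      rw [hO₁app]
      exact (hgC _).2 rfl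
  -- K-side characterizations
  have hKs : ∀ (t : ℕ) (s : Finset V₁) (hs : s ∈ K₁.erase C₁) (hr : ri s < N₁ - 1),
      (s.map φ₁ ∈ psub K O t ↔ ((σc ⟨ri s, hr⟩ : Fin N) : ℕ) < t) := by
    intro t s hs hr
    obtain ⟨hr', heq'⟩ := hri s hs
    have hmem : s.map φ₁ ∈ K := h.mem_K1 (mem_of_mem_erase hs) (ne_of_mem_erase hs)
    rw [mem_psub_of_mem hmem]
    have hOs : O.symm ⟨s.map φ₁, hmem⟩ = σc ⟨ri s, hr⟩ := by
      rw [Equiv.symm_apply_eq]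
      exact Subtype.ext heq'.symm
    simp only [hOs]
  have hKu : ∀ (t : ℕ) (u : Finset V₂) (hu : u ∈ K₂.erase C₂),
      (u.map φ₂ ∈ psub K O t ↔
        ((O.symm ⟨u.map φ₂, h.mem_K2 (mem_of_mem_erase hu) (ne_of_mem_erase hu)⟩ : Fin N) : ℕ) < t) :=
    fun t u hu => mem_psub_of_mem _
  have hKuI₂ : ∀ (u : Finset V₂) (hu : u ∈ K₂.erase C₂),
      (O.symm ⟨u.map φ₂, h.mem_K2 (mem_of_mem_erase hu) (ne_of_mem_erase hu)⟩ : Fin N) ≤ T := by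
    intro u hu
    refine Finset.le_max' I₂ _ ?_
    refine mem_filter.2 ⟨mem_univ _, ?_⟩
    simp only [Equiv.apply_symm_apply]
    exact mem_image_of_mem _ hu
  -- the simplex at position T
  obtain ⟨uT, huT, huTeq⟩ : ∃ u ∈ K₂.erase C₂, (O T).val = u.map φ₂ := by
    have hTI : T ∈ I₂ := I₂.max'_mem hI₂ne
    have h2 : (O T).val ∈ K₂' := (mem_filter.1 hTI).2
    obtain ⟨u, hu, hueq⟩ := mem_image.1 h2
    exact ⟨u, hu, hueq.symm⟩
  -- main step: each level of O₁ is dominated by some level of O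
  have hmain : ∀ j ∈ Finset.range (N₁ + 1), pLam n K₁ O₁ j ≤ ptrunkOrd n K O := by
    intro j hj
    rw [mem_range] at hj
    rcases Nat.eq_zero_or_pos j with rfl | hjpos
    · have hempty : psub K₁ O₁ 0 = ∅ := by
        ext s
        rw [mem_psub_iff]
        simp
      rw [pLam, plevel_eq_bnd, hempty]
      have : bnd n K₁ (∅ : Finset (Finset V₁)) = ∅ := by
        ext f
        rw [mem_bnd]
        simp
      rw [this]
      simp
    by_cases hjp : j ≤ p
    -- case j ≤ p : use core0 at time t = σc ⟨j-1⟩ + 1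
    · have hj1 : j - 1 < N₁ - 1 := by omega
      set t := ((σc ⟨j - 1, hj1⟩ : Fin N) : ℕ) + 1 with ht
      have htN : t ≤ N := by
        have := (σc ⟨j - 1, hj1⟩).isLt
        omega
      have hcore := h.core0 hn (A := psub K₁ O₁ j) (S := psub K O t)
        psub_subset ?_ ?_ ?_
      · rw [pLam, plevel_eq_bnd]
        calc (bnd n K₁ (psub K₁ O₁ j)).card ≤ (bnd n K (psub K O t)).card := hcore
          _ = pLam n K O t := by rw [pLam, plevel_eq_bnd]
          _ ≤ ptrunkOrd n K O := pLam_le_ptrunkOrd O htN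
      -- C₁ ∉ A
      · rw [hpsC]; omega
      -- membership transfer
      · intro s hsK hsC
        have hs : s ∈ K₁.erase C₁ := mem_erase.2 ⟨hsC, hsK⟩
        obtain ⟨hr, -⟩ := hri s hs
        rw [hps1 j s hs, hKs t s hs hr, ht]
        have hle : ((σc ⟨ri s, hr⟩ : Fin N) : ℕ) ≤ ((σc ⟨j - 1, hj1⟩ : Fin N) : ℕ)
            ↔ ri s ≤ j - 1 := by
          have := hσle ⟨ri s, hr⟩ ⟨j - 1, hj1⟩
          rw [Fin.le_def, Fin.le_def] at this
          exact this
        rw [hidxs s]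
        constructor
        · intro hlt
          have hrij : ri s < j := by split at hlt <;> omega
          have h2 := hle.2 (by omega)
          omega
        · intro hlt
          have h2 := hle.1 (by omega)
          have hrp : ri s < p := by omega
          rw [if_pos hrp]; omega
      -- properness of the K₂ side
      · refine ⟨uT, mem_of_mem_erase huT, ne_of_mem_erase huT, ?_⟩
        rw [hKu t uT huT]
        have hsymm : (O.symm ⟨uT.map φ₂, h.mem_K2 (mem_of_mem_erase huT) (ne_of_mem_erase huT)⟩) = T := by
          rw [Equiv.symm_apply_eq]
          exact Subtype.ext huTeq.symm
        rw [hsymm, ht]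
        have hlt : σc ⟨j - 1, hj1⟩ < T := (hF1 ⟨j - 1, hj1⟩).1 (show j - 1 < p by omega)
        rw [Fin.lt_def] at hlt
        omega
    -- case j > p : use core1
    · push_neg at hjp
      by_cases hjp1 : j = p + 1
      -- t = T + 1
      · set t := (T : ℕ) + 1 with ht
        have htN : t ≤ N := by have := T.isLt; omega
        have hcore := h.core1 (A := psub K₁ O₁ j) (S := psub K O t)
          psub_subset ((hpsC j).2 (by omega)) ?_ ?_
        · rw [pLam, plevel_eq_bnd]
          calc (bnd n K₁ (psub K₁ O₁ j)).card ≤ (bnd n K (psub K O t)).card := hcore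
            _ = pLam n K O t := by rw [pLam, plevel_eq_bnd]
            _ ≤ ptrunkOrd n K O := pLam_le_ptrunkOrd O htN
        · intro s hsK hsC
          have hs : s ∈ K₁.erase C₁ := mem_erase.2 ⟨hsC, hsK⟩
          obtain ⟨hr, -⟩ := hri s hs
          rw [hps1 j s hs, hKs t s hs hr, ht, hidxs s]
          have hne : σc ⟨ri s, hr⟩ ≠ T := by
            intro he
            exact hdisjI _ (hσcI _) (by rw [he]; exact I₂.max'_mem hI₂ne)
          have hF : ri s < p ↔ ((σc ⟨ri s, hr⟩ : Fin N) : ℕ) < ((T : Fin N) : ℕ) := by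
            have h3 := hF1 ⟨ri s, hr⟩
            rw [Fin.lt_def] at h3
            exact h3
          have hnev : ((σc ⟨ri s, hr⟩ : Fin N) : ℕ) ≠ (T : ℕ) :=
            fun he => hne (Fin.ext he)
          constructor
          · intro hlt
            have hrp : ri s < p := by split at hlt <;> omega
            have := hF.1 hrp
            omega
          · intro hlt
            have hlt2 : ((σc ⟨ri s, hr⟩ : Fin N) : ℕ) < (T : ℕ) := by omega
            have hrp := hF.2 hlt2
            rw [if_pos hrp]
            omega
        · intro u huK huC
          have hu : u ∈ K₂.erase C₂ := mem_erase.2 ⟨huC, huK⟩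
          rw [hKu t u hu, ht]
          have := hKuI₂ u hu
          rw [Fin.le_def] at this
          omega
      -- t = σc ⟨j-2⟩ + 1
      · have hj2 : j - 2 < N₁ - 1 := by omega
        set t := ((σc ⟨j - 2, hj2⟩ : Fin N) : ℕ) + 1 with ht
        have htN : t ≤ N := by
          have := (σc ⟨j - 2, hj2⟩).isLt
          omega
        have hTlt : (T : ℕ) < t := by
          have hnotlt : ¬ ((j : ℕ) - 2 < p) := by omega
          have hF := hF1 ⟨j - 2, hj2⟩
          have h1 : ¬ (σc ⟨j - 2, hj2⟩ < T) := fun hc => hnotlt (hF.2 hc)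
          have hne : σc ⟨j - 2, hj2⟩ ≠ T := by
            intro he
            exact hdisjI _ (hσcI _) (by rw [he]; exact I₂.max'_mem hI₂ne)
          rw [Fin.lt_def] at h1
          have hnev : ((σc ⟨j-2, hj2⟩ : Fin N) : ℕ) ≠ (T : ℕ) := fun he => hne (Fin.ext he)
          omega
        have hcore := h.core1 (A := psub K₁ O₁ j) (S := psub K O t)
          psub_subset ((hpsC j).2 (by omega)) ?_ ?_
        · rw [pLam, plevel_eq_bnd]
          calc (bnd n K₁ (psub K₁ O₁ j)).card ≤ (bnd n K (psub K O t)).card := hcore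
            _ = pLam n K O t := by rw [pLam, plevel_eq_bnd]
            _ ≤ ptrunkOrd n K O := pLam_le_ptrunkOrd O htN
        · intro s hsK hsC
          have hs : s ∈ K₁.erase C₁ := mem_erase.2 ⟨hsC, hsK⟩
          obtain ⟨hr, -⟩ := hri s hs
          rw [hps1 j s hs, hKs t s hs hr, ht, hidxs s]
          have hle : ((σc ⟨ri s, hr⟩ : Fin N) : ℕ) ≤ ((σc ⟨j - 2, hj2⟩ : Fin N) : ℕ)
              ↔ ri s ≤ j - 2 := by
            have := hσle ⟨ri s, hr⟩ ⟨j - 2, hj2⟩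
            rw [Fin.le_def, Fin.le_def] at this
            exact this
          constructor
          · intro hlt
            have hrle : ri s ≤ j - 2 := by split at hlt <;> omega
            have h2 := hle.2 hrle
            omega
          · intro hlt
            have h2 := hle.1 (by omega)
            split <;> omega
        · intro u huK huC
          have hu : u ∈ K₂.erase C₂ := mem_erase.2 ⟨huC, huK⟩
          rw [hKu t u hu]
          have := hKuI₂ u hu
          rw [Fin.le_def] at this
          omega
  -- conclude
  calc ptrunk n K₁ ≤ ptrunkOrd n K₁ O₁ := ptrunk_le O₁
    _ ≤ ptrunkOrd n K O := Finset.sup_le hmain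
    _ = ptrunk n K := hO

end Lower
section Upper
variable {V V₁ V₂ : Type} [DecidableEq V] [Fintype V] [DecidableEq V₁] [Fintype V₁]
  [DecidableEq V₂] [Fintype V₂]

lemma GlueHyp.symm {n : ℕ} {K : Finset (Finset V)} {K₁ : Finset (Finset V₁)}
    {K₂ : Finset (Finset V₂)} {C₁ : Finset V₁} {C₂ : Finset V₂} {φ₁ : V₁ ↪ V} {φ₂ : V₂ ↪ V}
    (h : GlueHyp n K K₁ K₂ C₁ C₂ φ₁ φ₂) : GlueHyp n K K₂ K₁ C₂ C₁ φ₂ φ₁ :=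
  ⟨h.pm2, h.pm1, h.mem2, h.mem1, h.glue.symm,
    fun v₂ v₁ he => ⟨(h.coll v₁ v₂ he.symm).2, (h.coll v₁ v₂ he.symm).1⟩,
    by rw [h.hK, union_comm]⟩

lemma GlueHyp.upper {n : ℕ} {K : Finset (Finset V)} {K₁ : Finset (Finset V₁)}
    {K₂ : Finset (Finset V₂)} {C₁ : Finset V₁} {C₂ : Finset V₂} {φ₁ : V₁ ↪ V} {φ₂ : V₂ ↪ V}
    (h : GlueHyp n K K₁ K₂ C₁ C₂ φ₁ φ₂)
    (O₁ : Fin K₁.card ≃ {s : Finset V₁ // s ∈ K₁})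
    (O₂ : Fin K₂.card ≃ {s : Finset V₂ // s ∈ K₂})
    (hc1 : ∀ i : Fin K₁.card, ((O₁ i).val = C₁ ↔ (i : ℕ) = K₁.card - 1))
    (hc2 : ∀ i : Fin K₂.card, ((O₂ i).val = C₂ ↔ (i : ℕ) = 0)) :
    ptrunk n K ≤ max (ptrunkOrd n K₁ O₁) (ptrunkOrd n K₂ O₂) := by
  classical
  revert O₁ O₂
  set N₁ := K₁.card with hN₁
  set N₂ := K₂.card with hN₂
  intro O₁ O₂ hc1 hc2
  have hN1pos : 1 ≤ N₁ := card_pos.2 ⟨C₁, h.mem1⟩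
  have hN2pos : 1 ≤ N₂ := card_pos.2 ⟨C₂, h.mem2⟩
  set N := K.card with hN
  have hNval : N = N₁ + N₂ - 2 := by
    have hdisj : Disjoint ((K₁.erase C₁).image (fun s => s.map φ₁))
        ((K₂.erase C₂).image (fun s => s.map φ₂)) := by
      rw [Finset.disjoint_left]
      intro t ht1 ht2
      obtain ⟨s, hs, hseq⟩ := mem_image.1 ht1
      obtain ⟨u, hu, hueq⟩ := mem_image.1 ht2
      exact (ne_of_mem_erase hs) (h.eq_C1 (mem_of_mem_erase hs) (hseq.trans hueq.symm))
    rw [hN, h.hK, card_union_of_disjoint hdisj,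
      Finset.card_image_of_injOn (fun a _ b _ hab => Finset.map_injective φ₁ hab),
      Finset.card_image_of_injOn (fun a _ b _ hab => Finset.map_injective φ₂ hab),
      card_erase_of_mem h.mem1, card_erase_of_mem h.mem2, ← hN₁, ← hN₂]
    omega
  have hb1 : ∀ k : Fin N, (k : ℕ) < N₁ - 1 → (k : ℕ) < N₁ := by intro k hk; omega
  have hb2 : ∀ k : Fin N, ¬ (k : ℕ) < N₁ - 1 → (k : ℕ) - (N₁ - 1) + 1 < N₂ := by
    intro k hk
    have := k.isLt
    omega
  set g : Fin N → {t : Finset V // t ∈ K} := fun k =>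
    if hk : (k : ℕ) < N₁ - 1 then
      ⟨((O₁ ⟨(k : ℕ), hb1 k hk⟩).val).map φ₁, by
        refine h.mem_K1 (O₁ _).2 ?_
        intro he
        have := (hc1 ⟨(k : ℕ), hb1 k hk⟩).1 he
        simp only [] at this
        omega⟩
    else
      ⟨((O₂ ⟨(k : ℕ) - (N₁ - 1) + 1, hb2 k hk⟩).val).map φ₂, by
        refine h.mem_K2 (O₂ _).2 ?_
        intro he
        have := (hc2 ⟨(k : ℕ) - (N₁ - 1) + 1, hb2 k hk⟩).1 he
        simp only [] at this
        omega⟩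
    with hg
  have hgcase : ∀ k : Fin N,
      ((k : ℕ) < N₁ - 1 ∧ ∃ i : Fin N₁, (i : ℕ) = (k : ℕ) ∧ (g k).val = (O₁ i).val.map φ₁)
      ∨ (¬ (k : ℕ) < N₁ - 1 ∧
          ∃ i : Fin N₂, (i : ℕ) = (k : ℕ) - (N₁ - 1) + 1 ∧ (g k).val = (O₂ i).val.map φ₂) := by
    intro k
    by_cases hk : (k : ℕ) < N₁ - 1
    · refine Or.inl ⟨hk, ⟨(k : ℕ), hb1 k hk⟩, rfl, ?_⟩
      simp only [hg, dif_pos hk]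
    · refine Or.inr ⟨hk, ⟨(k : ℕ) - (N₁ - 1) + 1, hb2 k hk⟩, rfl, ?_⟩
      simp only [hg, dif_neg hk]
  have hginj : Function.Injective g := by
    intro a b hab
    have hab' : (g a).val = (g b).val := by rw [hab]
    rcases hgcase a with ⟨ha, ia, hia, hva⟩ | ⟨ha, ia, hia, hva⟩ <;>
      rcases hgcase b with ⟨hb, ib, hib, hvb⟩ | ⟨hb, ib, hib, hvb⟩
    · rw [hva, hvb] at hab'
      have := O₁.injective (Subtype.ext (Finset.map_injective φ₁ hab'))
      apply Fin.ext
      rw [← hia, ← hib, this]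
    · rw [hva, hvb] at hab'
      exact absurd ((hc1 ia).1 (h.eq_C1 (O₁ ia).2 hab')) (by omega)
    · rw [hva, hvb] at hab'
      exact absurd ((hc1 ib).1 (h.eq_C1 (O₁ ib).2 hab'.symm)) (by omega)
    · rw [hva, hvb] at hab'
      have := O₂.injective (Subtype.ext (Finset.map_injective φ₂ hab'))
      have h2 : (ia : ℕ) = (ib : ℕ) := by rw [this]
      apply Fin.ext
      omega
  set O : Fin N ≃ {t : Finset V // t ∈ K} :=
    Equiv.ofBijective g ((Fintype.bijective_iff_injective_and_card g).2
      ⟨hginj, by rw [Fintype.card_fin, Fintype.card_coe]⟩) with hO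
  have hOapp : ∀ k, O k = g k := fun _ => rfl
  -- transfer of sublevel membership, K₁ side
  have hps1 : ∀ (j : ℕ) (s : Finset V₁), s ∈ K₁.erase C₁ → j ≤ N₁ - 1 →
      (s ∈ psub K₁ O₁ j ↔ s.map φ₁ ∈ psub K O j) := by
    intro j s hs hj
    constructor
    · intro hmem
      obtain ⟨i, hij, hiv⟩ := mem_psub_iff.1 hmem
      have hi1 : (i : ℕ) < N₁ - 1 := by omega
      refine mem_psub_iff.2 ⟨⟨(i : ℕ), by omega⟩, hij, ?_⟩
      rw [hOapp]
      rcases hgcase ⟨(i : ℕ), by omega⟩ with ⟨-, ii, hii, hvv⟩ | ⟨hcon, -⟩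
      · rw [hvv]
        have : ii = i := Fin.ext (by simp only [hii])
        rw [this, hiv]
      · exact absurd hi1 hcon
    · intro hmem
      obtain ⟨k, hkj, hkv⟩ := mem_psub_iff.1 hmem
      rw [hOapp] at hkv
      rcases hgcase k with ⟨hk, ii, hii, hvv⟩ | ⟨hk, ii, hii, hvv⟩
      · rw [hvv] at hkv
        have : (O₁ ii).val = s := Finset.map_injective φ₁ hkv
        exact mem_psub_iff.2 ⟨ii, by omega, this⟩
      · rw [hvv] at hkv
        exact absurd (h.eq_C1 (mem_of_mem_erase hs) hkv.symm) (ne_of_mem_erase hs)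
  -- C₁ not in sublevels below N₁ - 1
  have hpsC1 : ∀ j : ℕ, j ≤ N₁ - 1 → C₁ ∉ psub K₁ O₁ j := by
    intro j hj hmem
    obtain ⟨i, hij, hiv⟩ := mem_psub_iff.1 hmem
    have := (hc1 i).1 hiv
    omega
  -- K₂-side membership for j ≥ N₁ - 1
  have hps2 : ∀ (j : ℕ) (u : Finset V₂), u ∈ K₂.erase C₂ → N₁ - 1 ≤ j →
      (u ∈ psub K₂ O₂ (j - (N₁ - 1) + 1) ↔ u.map φ₂ ∈ psub K O j) := by
    intro j u hu hj
    constructor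
    · intro hmem
      obtain ⟨i, hij, hiv⟩ := mem_psub_iff.1 hmem
      have hi0 : (i : ℕ) ≠ 0 := by
        intro he
        exact (ne_of_mem_erase hu) (by rw [← hiv]; exact (hc2 i).2 he ▸ rfl)
      have hkb : (i : ℕ) + (N₁ - 1) - 1 < N := by
        have := i.isLt
        omega
      refine mem_psub_iff.2 ⟨⟨(i : ℕ) + (N₁ - 1) - 1, hkb⟩,
        (show (i : ℕ) + (N₁ - 1) - 1 < j by omega), ?_⟩
      rw [hOapp]
      rcases hgcase ⟨(i : ℕ) + (N₁ - 1) - 1, hkb⟩ with ⟨hcon, -⟩ | ⟨-, ii, hii, hvv⟩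
      · have hcon' : (i : ℕ) + (N₁ - 1) - 1 < N₁ - 1 := hcon
        omega
      · rw [hvv]
        have : ii = i := Fin.ext (by simp only [hii]; omega)
        rw [this, hiv]
    · intro hmem
      obtain ⟨k, hkj, hkv⟩ := mem_psub_iff.1 hmem
      rw [hOapp] at hkv
      rcases hgcase k with ⟨hk, ii, hii, hvv⟩ | ⟨hk, ii, hii, hvv⟩
      · rw [hvv] at hkv
        exact absurd (h.eq_C2 (mem_of_mem_erase hu) hkv) (ne_of_mem_erase hu)
      · rw [hvv] at hkv
        have : (O₂ ii).val = u := Finset.map_injective φ₂ hkv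
        exact mem_psub_iff.2 ⟨ii, by omega, this⟩
  -- C₂ in sublevel j' when j ≥ N₁ - 1... (index 0)
  have hpsC2 : ∀ j : ℕ, N₁ - 1 ≤ j → C₂ ∈ psub K₂ O₂ (j - (N₁ - 1) + 1) := by
    intro j hj
    refine mem_psub_iff.2 ⟨⟨0, by omega⟩, (show (0 : ℕ) < j - (N₁ - 1) + 1 by omega), ?_⟩
    exact (hc2 ⟨0, by omega⟩).2 rfl
  -- the per-level bounds
  have hlevel1 : ∀ j : ℕ, j ≤ N₁ - 1 → pLam n K O j ≤ pLam n K₁ O₁ j := by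
    intro j hj
    rw [pLam, pLam]
    have hsub : plevel n K O j ⊆ (plevel n K₁ O₁ j).image (fun f => f.map φ₁) := by
      intro F hF
      rw [plevel_eq_bnd] at hF
      obtain ⟨hFc, ⟨s', hs'mem, hFs'⟩, ⟨T, hTK, hTmem, hFT⟩⟩ := mem_bnd.1 hF
      -- inside witness is a φ₁ image
      obtain ⟨k, hkj, hkv⟩ := mem_psub_iff.1 hs'mem
      rw [hOapp] at hkv
      rcases hgcase k with ⟨hk, ii, hii, hvv⟩ | ⟨hk, -⟩
      swap
      · omega
      rw [hvv] at hkv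
      subst hkv
      -- F = f.map φ₁ with f ⊆ (O₁ ii).val
      obtain ⟨f, hfsub, hfeq⟩ := Finset.subset_map_iff.1 hFs'
      have hfc : f.card = n := by
        have := congrArg Finset.card hfeq
        rw [card_map] at this
        omega
      have hii_mem : (O₁ ii).val ∈ psub K₁ O₁ j := mem_psub_iff.2 ⟨ii, by omega, rfl⟩
      refine mem_image.2 ⟨f, ?_, hfeq.symm⟩
      rw [plevel_eq_bnd]
      refine mem_bnd.2 ⟨hfc, ⟨(O₁ ii).val, hii_mem, hfsub⟩, ?_⟩
      -- outside witness
      rcases (h.mem_K_iff.1 hTK) with ⟨s'', hs'', hTeq⟩ | ⟨u'', hu'', hTeq⟩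
      · subst hTeq
        have hfs'' : f ⊆ s'' := by
          rw [hfeq] at hFT
          exact map_subset_map.1 hFT
        refine ⟨s'', mem_of_mem_erase hs'', fun hmem => hTmem ?_, hfs''⟩
        exact (hps1 j s'' hs'' hj).1 hmem
      · subst hTeq
        -- F lies on the glued sphere, so f ⊆ C₁
        have hfC1 : f ⊆ C₁ := by
          intro x hx
          have hx1 : φ₁ x ∈ F := hfeq ▸ mem_map_of_mem φ₁ hx
          have hx2 : φ₁ x ∈ u''.map φ₂ := hFT hx1
          obtain ⟨y, -, hy⟩ := Finset.mem_map.1 hx2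
          exact (h.coll x y hy.symm).1
        exact ⟨C₁, h.mem1, hpsC1 j hj, hfC1⟩
    calc (plevel n K O j).card ≤ ((plevel n K₁ O₁ j).image (fun f => f.map φ₁)).card :=
        card_le_card hsub
      _ ≤ (plevel n K₁ O₁ j).card := card_image_le
  -- all K₁-side simplices are in the sublevel for j ≥ N₁ - 1
  have hps1full : ∀ j : ℕ, N₁ - 1 ≤ j → ∀ s'' ∈ K₁.erase C₁, s''.map φ₁ ∈ psub K O j := by
    intro j hj s'' hs''
    set i := O₁.symm ⟨s'', mem_of_mem_erase hs''⟩ with hi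
    have hival : (O₁ i).val = s'' := by rw [hi, Equiv.apply_symm_apply]
    have hine : (i : ℕ) ≠ N₁ - 1 := by
      intro he
      exact (ne_of_mem_erase hs'') (by rw [← hival]; exact (hc1 i).2 he)
    have hilt : (i : ℕ) < N₁ - 1 := by
      have := i.isLt
      omega
    have hkb : (i : ℕ) < N := by omega
    refine mem_psub_iff.2 ⟨⟨(i : ℕ), hkb⟩, (show (i : ℕ) < j by omega), ?_⟩
    rw [hOapp]
    rcases hgcase ⟨(i : ℕ), hkb⟩ with ⟨-, ii, hii, hvv⟩ | ⟨hcon, -⟩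
    · rw [hvv]
      have : ii = i := Fin.ext (by simp only [hii])
      rw [this, hival]
    · exact absurd hilt hcon
  have hlevel2 : ∀ j : ℕ, N₁ - 1 ≤ j → pLam n K O j ≤ pLam n K₂ O₂ (j - (N₁ - 1) + 1) := by
    intro j hj
    rw [pLam, pLam]
    have hsub : plevel n K O j ⊆ (plevel n K₂ O₂ (j - (N₁ - 1) + 1)).image
        (fun f => f.map φ₂) := by
      intro F hF
      rw [plevel_eq_bnd] at hF
      obtain ⟨hFc, ⟨s', hs'mem, hFs'⟩, ⟨T, hTK, hTmem, hFT⟩⟩ := mem_bnd.1 hF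
      -- outside witness is a φ₂ image of something outside
      obtain ⟨u'', hu'', hTeq⟩ : ∃ u'' ∈ K₂.erase C₂, T = u''.map φ₂ := by
        rcases (h.mem_K_iff.1 hTK) with ⟨s'', hs'', hTeq⟩ | ⟨u'', hu'', hTeq⟩
        · exact absurd (hTeq ▸ hps1full j hj s'' hs'') hTmem
        · exact ⟨u'', hu'', hTeq⟩
      subst hTeq
      obtain ⟨g'', hg''sub, hFeq⟩ := Finset.subset_map_iff.1 hFT
      have hgc : g''.card = n := by
        have := congrArg Finset.card hFeq
        rw [card_map] at this
        omega
      have hout : u'' ∉ psub K₂ O₂ (j - (N₁ - 1) + 1) :=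
        fun hmem => hTmem ((hps2 j u'' hu'' hj).1 hmem)
      refine mem_image.2 ⟨g'', ?_, hFeq.symm⟩
      rw [plevel_eq_bnd]
      refine mem_bnd.2 ⟨hgc, ?_, ⟨u'', mem_of_mem_erase hu'', hout, hg''sub⟩⟩
      -- inside witness
      obtain ⟨k, hkj, hkv⟩ := mem_psub_iff.1 hs'mem
      rw [hOapp] at hkv
      rcases hgcase k with ⟨hk, ii, hii, hvv⟩ | ⟨hk, ii, hii, hvv⟩
      · -- inside witness is on the K₁ side: F lies on the glued sphere
        have hgC2 : g'' ⊆ C₂ := by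
          intro y hy
          have hy1 : φ₂ y ∈ F := hFeq ▸ mem_map_of_mem φ₂ hy
          have hy2 : φ₂ y ∈ (O₁ ii).val.map φ₁ := by
            rw [hvv] at hkv
            rw [← hkv] at hFs'
            exact hFs' hy1
          obtain ⟨x, -, hx⟩ := Finset.mem_map.1 hy2
          exact (h.coll x y hx).2
        exact ⟨C₂, hpsC2 j hj, hgC2⟩
      · rw [hvv] at hkv
        have hiimem : (O₂ ii).val ∈ psub K₂ O₂ (j - (N₁ - 1) + 1) :=
          mem_psub_iff.2 ⟨ii, by omega, rfl⟩
        refine ⟨(O₂ ii).val, hiimem, ?_⟩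
        have : F ⊆ (O₂ ii).val.map φ₂ := by rw [← hkv] at hFs'; exact hFs'
        rw [hFeq] at this
        exact map_subset_map.1 this
    calc (plevel n K O j).card ≤ ((plevel n K₂ O₂ (j - (N₁ - 1) + 1)).image
          (fun f => f.map φ₂)).card := card_le_card hsub
      _ ≤ (plevel n K₂ O₂ (j - (N₁ - 1) + 1)).card := card_image_le
  -- assemble
  calc ptrunk n K ≤ ptrunkOrd n K O := ptrunk_le O
    _ ≤ max (ptrunkOrd n K₁ O₁) (ptrunkOrd n K₂ O₂) := by
      refine Finset.sup_le ?_
      intro j hj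
      rw [mem_range] at hj
      by_cases hjc : j ≤ N₁ - 1
      · calc pLam n K O j ≤ pLam n K₁ O₁ j := hlevel1 j hjc
          _ ≤ ptrunkOrd n K₁ O₁ := pLam_le_ptrunkOrd O₁ (by omega)
          _ ≤ _ := le_max_left _ _
      · push_neg at hjc
        calc pLam n K O j ≤ pLam n K₂ O₂ (j - (N₁ - 1) + 1) := hlevel2 j (by omega)
          _ ≤ ptrunkOrd n K₂ O₂ := pLam_le_ptrunkOrd O₂ (by omega)
          _ ≤ _ := le_max_right _ _

end Upper


/-- trunk of a connected sum: for closed even-dimensional simplicial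
pseudomanifolds M₁, M₂ (n ≥ 2, unit facet weights) there is a connected sum M₁ # M₂ with
tr(M₁ # M₂) = max(tr(M₁), tr(M₂)). -/
theorem stmt18 {V₁ V₂ : Type} [DecidableEq V₁] [Fintype V₁] [DecidableEq V₂] [Fintype V₂]
    (n : ℕ) (hn2 : 2 ≤ n) (hne : Even n)
    (K₁ : Finset (Finset V₁)) (K₂ : Finset (Finset V₂))
    (h1 : IsPseudomanifold n K₁) (h2 : IsPseudomanifold n K₂) :
    ∃ K : Finset (Finset (V₁ ⊕ V₂)), IsConnSum K K₁ K₂ ∧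
      ptrunk n K = max (ptrunk n K₁) (ptrunk n K₂) := by

  classical
  obtain ⟨O₁, hO₁⟩ := ptrunk_exists n K₁
  obtain ⟨O₂, hO₂⟩ := ptrunk_exists n K₂
  have hN1pos : 0 < K₁.card := card_pos.2 h1.1
  have hN2pos : 0 < K₂.card := card_pos.2 h2.1
  set C₁ : Finset V₁ := (O₁ ⟨K₁.card - 1, by omega⟩).val with hC₁
  set C₂ : Finset V₂ := (O₂ ⟨0, hN2pos⟩).val with hC₂
  have hC₁K : C₁ ∈ K₁ := (O₁ _).2
  have hC₂K : C₂ ∈ K₂ := (O₂ _).2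
  have hcc : C₂.card = C₁.card := by rw [h1.2.1 C₁ hC₁K, h2.2.1 C₂ hC₂K]
  set e : {x // x ∈ C₂} ≃ {x // x ∈ C₁} := Finset.equivOfCardEq hcc with he
  set φ₁ : V₁ ↪ V₁ ⊕ V₂ := Function.Embedding.inl with hφ₁
  have hφ₂inj : Function.Injective (fun v : V₂ =>
      if h : v ∈ C₂ then Sum.inl ((e ⟨v, h⟩ : {x // x ∈ C₁}) : V₁) else Sum.inr v) := by
    intro a b hab
    simp only [] at hab
    by_cases ha : a ∈ C₂ <;> by_cases hb : b ∈ C₂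
    · rw [dif_pos ha, dif_pos hb] at hab
      have h3 : e ⟨a, ha⟩ = e ⟨b, hb⟩ := Subtype.ext (Sum.inl.inj hab)
      have h4 := e.injective h3
      exact congrArg Subtype.val h4
    · rw [dif_pos ha, dif_neg hb] at hab
      exact absurd hab (by simp)
    · rw [dif_neg ha, dif_pos hb] at hab
      exact absurd hab (by simp)
    · rw [dif_neg ha, dif_neg hb] at hab
      exact Sum.inr.inj hab
  set φ₂ : V₂ ↪ V₁ ⊕ V₂ := ⟨_, hφ₂inj⟩ with hφ₂
  have hφ₂pos : ∀ v (hv : v ∈ C₂), φ₂ v = Sum.inl ((e ⟨v, hv⟩ : {x // x ∈ C₁}) : V₁) := by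
    intro v hv
    simp only [hφ₂, Function.Embedding.coeFn_mk, dif_pos hv]
  have hφ₂neg : ∀ v, v ∉ C₂ → φ₂ v = Sum.inr v := by
    intro v hv
    simp only [hφ₂, Function.Embedding.coeFn_mk, dif_neg hv]
  have hφ₁app : ∀ v : V₁, φ₁ v = Sum.inl v := fun v => rfl
  have hglue : C₁.map φ₁ = C₂.map φ₂ := by
    apply Finset.Subset.antisymm
    · intro x hx
      obtain ⟨w, hw, rfl⟩ := Finset.mem_map.1 hx
      refine Finset.mem_map.2 ⟨((e.symm ⟨w, hw⟩ : {x // x ∈ C₂}) : V₂), (e.symm ⟨w, hw⟩).2, ?_⟩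
      rw [hφ₂pos _ (e.symm ⟨w, hw⟩).2, hφ₁app]
      congr 1
      have : (⟨((e.symm ⟨w, hw⟩ : {x // x ∈ C₂}) : V₂), (e.symm ⟨w, hw⟩).2⟩ :
          {x // x ∈ C₂}) = e.symm ⟨w, hw⟩ := Subtype.ext rfl
      rw [this, Equiv.apply_symm_apply]
    · intro x hx
      obtain ⟨v, hv, rfl⟩ := Finset.mem_map.1 hx
      rw [hφ₂pos v hv]
      exact Finset.mem_map.2 ⟨_, (e ⟨v, hv⟩).2, rfl⟩
  have hcoll : ∀ v₁ : V₁, ∀ v₂ : V₂, φ₁ v₁ = φ₂ v₂ → v₁ ∈ C₁ ∧ v₂ ∈ C₂ := by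
    intro v₁ v₂ hv
    by_cases hv2 : v₂ ∈ C₂
    · rw [hφ₂pos v₂ hv2, hφ₁app] at hv
      have h3 : v₁ = ((e ⟨v₂, hv2⟩ : {x // x ∈ C₁}) : V₁) := Sum.inl.inj hv
      exact ⟨h3 ▸ (e ⟨v₂, hv2⟩).2, hv2⟩
    · rw [hφ₂neg v₂ hv2, hφ₁app] at hv
      exact absurd hv (by simp)
  set K : Finset (Finset (V₁ ⊕ V₂)) :=
    (K₁.erase C₁).image (fun s => s.map φ₁) ∪ (K₂.erase C₂).image (fun s => s.map φ₂) with hK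
  have hg : GlueHyp n K K₁ K₂ C₁ C₂ φ₁ φ₂ := ⟨h1, h2, hC₁K, hC₂K, hglue, hcoll, hK⟩
  have hc1 : ∀ i : Fin K₁.card, ((O₁ i).val = C₁ ↔ (i : ℕ) = K₁.card - 1) := by
    intro i
    constructor
    · intro hv
      rw [hC₁] at hv
      have h3 : O₁ i = O₁ ⟨K₁.card - 1, by omega⟩ := Subtype.ext hv
      have h4 := O₁.injective h3
      rw [h4]
    · intro hv
      rw [hC₁]
      have h5 : i = ⟨K₁.card - 1, by omega⟩ := Fin.ext hv
      rw [h5]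
  have hc2 : ∀ i : Fin K₂.card, ((O₂ i).val = C₂ ↔ (i : ℕ) = 0) := by
    intro i
    constructor
    · intro hv
      rw [hC₂] at hv
      have h3 : O₂ i = O₂ ⟨0, hN2pos⟩ := Subtype.ext hv
      have h4 := O₂.injective h3
      rw [h4]
    · intro hv
      rw [hC₂]
      have h5 : i = ⟨0, hN2pos⟩ := Fin.ext hv
      rw [h5]
  refine ⟨K, ⟨C₁, C₂, φ₁, φ₂, hC₁K, hC₂K, hglue, hcoll, hK⟩, ?_⟩
  have hup := hg.upper O₁ O₂ hc1 hc2
  rw [hO₁, hO₂] at hup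
  have hlo1 : ptrunk n K₁ ≤ ptrunk n K := hg.trunk_le (by omega)
  have hlo2 : ptrunk n K₂ ≤ ptrunk n K := hg.symm.trunk_le (by omega)
  exact le_antisymm hup (max_le hlo1 hlo2)
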